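/- Any 𝒞-quasi-isomorphism between two bounded-above complexes whose terms all lie in 𝒞 is a homotopy equivalence. -/

import Mathlib

/-!
The mapping cone `C` of `f` is `𝒞`-acyclic: for `K ∈ 𝒞`, `Hom(K, -)` commutes with cones, and the
cone of the quasi-isomorphism `Hom(K, f)` is acyclic. Since `Cⁿ = Xⁿ⁺¹ ⊕ Yⁿ` is a sum of objects
of `𝒞`, every `z : Cⁿ → Cⁿ` with `z ≫ d = 0` factors through `d : Cⁿ⁻¹ → Cⁿ`; applied to
`z = 𝟙 - d ≫ s`, this builds a contracting homotopy `s` of `C` by descending induction from the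
degree above which `C` vanishes. A contractible cone is zero
in the triangulated category `K(𝒜)`, so `f` is an isomorphism there, i.e. a homotopy equivalence.
-/

open CategoryTheory Limits

universe v u

variable {A : Type u} [Category.{v} A] [Abelian A]

/-- A complex `X` is `𝒞`-acyclic if `Hom_𝒜(C, X)` is an acyclic complex of abelian
groups for every `C ∈ 𝒞`. -/
def CAcyclic (𝒞 : Set A) (X : CochainComplex A ℤ) : Prop :=
  ∀ C ∈ 𝒞, ∀ i : ℤ,
    (((preadditiveCoyoneda.obj (Opposite.op C)).mapHomologicalComplex
      (ComplexShape.up ℤ)).obj X).ExactAt i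

/-- A chain map `f` is a `𝒞`-quasi-isomorphism if `Hom_𝒜(C, f)` is a quasi-isomorphism
for every `C ∈ 𝒞`. -/
def CQuasiIso (𝒞 : Set A) {X Y : CochainComplex A ℤ} (f : X ⟶ Y) : Prop :=
  ∀ C ∈ 𝒞, QuasiIso (((preadditiveCoyoneda.obj (Opposite.op C)).mapHomologicalComplex
      (ComplexShape.up ℤ)).map f)

/-- A cochain complex is bounded above. -/
def BoundedAbove (X : CochainComplex A ℤ) : Prop :=
  ∃ n : ℤ, ∀ i : ℤ, n < i → IsZero (X.X i)

open CochainComplex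

lemma CAcyclic.exists_comp_d_eq {𝒞 : Set A} {Z : CochainComplex A ℤ} (hZ : CAcyclic 𝒞 Z)
    {C : A} (hC : C ∈ 𝒞) {n : ℤ} (z : C ⟶ Z.X n) (hz : z ≫ Z.d n (n + 1) = 0) :
    ∃ w : C ⟶ Z.X (n - 1), w ≫ Z.d (n - 1) n = z := by
  have h := hZ C hC n
  rw [HomologicalComplex.exactAt_iff' _ (n - 1) n (n + 1) (by simp) (by simp)] at h
  exact (ShortComplex.ab_exact_iff _).1 h z hz

-- Split `z` along the two summands `Xⁿ⁺¹` and `Yⁿ` of the cone and lift each piece.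
lemma CAcyclic.exists_comp_d_eq_of_mappingCone {𝒞 : Set A} {Z : CochainComplex A ℤ}
    (hZ : CAcyclic 𝒞 Z) {X Y : CochainComplex A ℤ} (f : X ⟶ Y) {n : ℤ}
    (hX : X.X (n + 1) ∈ 𝒞) (hY : Y.X n ∈ 𝒞) {m : ℤ} (z : (mappingCone f).X n ⟶ Z.X m)
    (hz : z ≫ Z.d m (m + 1) = 0) :
    ∃ w : (mappingCone f).X n ⟶ Z.X (m - 1), w ≫ Z.d (m - 1) m = z := by
  obtain ⟨w₁, hw₁⟩ := hZ.exists_comp_d_eq hX ((mappingCone.inl f).v (n + 1) n (by omega) ≫ z)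
    (by rw [Category.assoc, hz, comp_zero])
  obtain ⟨w₂, hw₂⟩ := hZ.exists_comp_d_eq hY ((mappingCone.inr f).f n ≫ z)
    (by rw [Category.assoc, hz, comp_zero])
  refine ⟨(mappingCone.fst f).1.v n (n + 1) rfl ≫ w₁ + (mappingCone.snd f).v n n (add_zero n) ≫ w₂,
    ?_⟩
  rw [Preadditive.add_comp, Category.assoc, Category.assoc, hw₁, hw₂, ← Category.assoc,
    ← Category.assoc, ← Preadditive.add_comp, mappingCone.id_X f n (n + 1) rfl, Category.id_comp]

lemma CQuasiIso.cAcyclic_mappingCone {𝒞 : Set A} {X Y : CochainComplex A ℤ} {f : X ⟶ Y}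
    (hf : CQuasiIso 𝒞 f) : CAcyclic 𝒞 (mappingCone f) := by
  intro C hC n
  set F := preadditiveCoyoneda.obj (Opposite.op C)
  have hFf : HomotopyCategory.quasiIso _ _
      ((HomotopyCategory.quotient _ _).map ((F.mapHomologicalComplex _).map f)) := by
    rw [HomotopyCategory.quotient_map_mem_quasiIso_iff, HomologicalComplex.mem_quasiIso_iff]
    exact hf C hC
  rw [HomotopyCategory.quasiIso_eq_trW_subcategoryAcyclic] at hFf
  have hcone := ((HomotopyCategory.subcategoryAcyclic _).trW_iff_of_distinguished _
    (HomotopyCategory.mappingCone_triangleh_distinguished _)).1 hFf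
  exact ((HomotopyCategory.quotient_obj_mem_subcategoryAcyclic_iff_exactAt _).1 hcone n).of_iso
    (mappingCone.mapHomologicalComplexIso f F).symm

lemma BoundedAbove.mappingCone {X Y : CochainComplex A ℤ} (hX : BoundedAbove X)
    (hY : BoundedAbove Y) (f : X ⟶ Y) : BoundedAbove (mappingCone f) := by
  obtain ⟨NX, hNX⟩ := hX
  obtain ⟨NY, hNY⟩ := hY
  exact ⟨max NX NY, fun i hi ↦ (mappingCone.isZero_X_iff f i).2
    ⟨hNX (i + 1) (by omega), hNY i (by omega)⟩⟩

lemma homotopyEquivalences_of_homotopy_id_mappingCone {X Y : CochainComplex A ℤ} (f : X ⟶ Y)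
    (h : Homotopy (𝟙 (mappingCone f)) 0) :
    HomologicalComplex.homotopyEquivalences A (ComplexShape.up ℤ) f := by
  rw [← HomotopyCategory.inverseImage_quotient_isomorphisms]
  exact ((mappingCone.triangleh f).isZero₃_iff_isIso₁
    (HomotopyCategory.mappingCone_triangleh_distinguished f)).1
    ((HomotopyCategory.isZero_quotient_obj_iff _).2 ⟨h⟩)

section Contraction

variable (Z : CochainComplex A ℤ)

-- The `else 0` branch is junk: when `Z` vanishes above `N` and cycles `Zⁱ → Zⁱ` are
-- boundaries, `𝟙 - d ≫ s` is a cycle, so a lift always exists.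
noncomputable def descendingContraction (N i j : ℤ) : Z.X i ⟶ Z.X j :=
  open scoped Classical in
  if N < i ∨ j + 1 ≠ i then 0
  else if h : ∃ w : Z.X i ⟶ Z.X j,
      w ≫ Z.d j i + Z.d i (i + 1) ≫ descendingContraction N (i + 1) i = 𝟙 _ then h.choose
  else 0
termination_by (N + 1 - i).toNat
decreasing_by omega

def IsContractingAt (s : ∀ i j, Z.X i ⟶ Z.X j) (i : ℤ) : Prop :=
  s i (i - 1) ≫ Z.d (i - 1) i + Z.d i (i + 1) ≫ s (i + 1) i = 𝟙 (Z.X i)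

variable {Z}

lemma isContractingAt_of_isZero {s : ∀ i j, Z.X i ⟶ Z.X j} {i : ℤ} (hi : IsZero (Z.X i)) :
    IsContractingAt Z s i :=
  hi.eq_of_src _ _

lemma descendingContraction_eq_zero (N : ℤ) {i j : ℤ} (hij : j + 1 ≠ i) :
    descendingContraction Z N i j = 0 := by
  rw [descendingContraction, if_pos (Or.inr hij)]

lemma isContractingAt_descendingContraction_of_succ {N i : ℤ} (hi : i ≤ N)
    (hlift : ∀ z : Z.X i ⟶ Z.X i, z ≫ Z.d i (i + 1) = 0 →
      ∃ w : Z.X i ⟶ Z.X (i - 1), w ≫ Z.d (i - 1) i = z)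
    (hsucc : IsContractingAt Z (descendingContraction Z N) (i + 1)) :
    IsContractingAt Z (descendingContraction Z N) i := by
  set s := descendingContraction Z N
  unfold IsContractingAt at hsucc ⊢
  rw [add_sub_cancel_right] at hsucc
  have hcycle : (𝟙 (Z.X i) - Z.d i (i + 1) ≫ s (i + 1) i) ≫ Z.d i (i + 1) = 0 := by
    rw [Preadditive.sub_comp, Category.assoc, eq_sub_of_add_eq hsucc]
    simp
  obtain ⟨w, hw⟩ := hlift _ hcycle
  have hex : ∃ w : Z.X i ⟶ Z.X (i - 1), w ≫ Z.d (i - 1) i + Z.d i (i + 1) ≫ s (i + 1) i = 𝟙 _ :=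
    ⟨w, by rw [hw, sub_add_cancel]⟩
  have hs : s i (i - 1) = hex.choose := by
    change descendingContraction Z N i (i - 1) = _
    rw [descendingContraction, if_neg (by omega), dif_pos hex]
  rw [hs]
  exact hex.choose_spec

lemma isContractingAt_descendingContraction {N : ℤ} (hN : ∀ i, N < i → IsZero (Z.X i))
    (hlift : ∀ (n : ℤ) (z : Z.X n ⟶ Z.X n), z ≫ Z.d n (n + 1) = 0 →
      ∃ w : Z.X n ⟶ Z.X (n - 1), w ≫ Z.d (n - 1) n = z) (i : ℤ) :
    IsContractingAt Z (descendingContraction Z N) i := by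
  obtain hi | hi := lt_or_ge N i
  · exact isContractingAt_of_isZero (hN i hi)
  refine Int.leInductionDown (m := N + 1) (isContractingAt_of_isZero (hN _ (lt_add_one N)))
    (fun n hn ih ↦ ?_) i (by omega)
  exact isContractingAt_descendingContraction_of_succ (by omega) (hlift _) (by rwa [sub_add_cancel])

lemma BoundedAbove.nonempty_homotopy_id_zero (hZ : BoundedAbove Z)
    (hlift : ∀ (n : ℤ) (z : Z.X n ⟶ Z.X n), z ≫ Z.d n (n + 1) = 0 →
      ∃ w : Z.X n ⟶ Z.X (n - 1), w ≫ Z.d (n - 1) n = z) :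
    Nonempty (Homotopy (𝟙 Z) 0) := by
  obtain ⟨N, hN⟩ := hZ
  refine ⟨{ hom := descendingContraction Z N
            zero := fun i j hij ↦ descendingContraction_eq_zero N hij
            comm := fun i ↦ ?_ }⟩
  rw [dNext_eq _ (show (ComplexShape.up ℤ).Rel i (i + 1) by simp),
    prevD_eq _ (show (ComplexShape.up ℤ).Rel (i - 1) i by simp)]
  simpa [add_comm] using (isContractingAt_descendingContraction hN hlift i).symm

end Contraction

/-- any `𝒞`-quasi-isomorphism between bounded-above complexes with terms
in `𝒞` is a homotopy equivalence. -/
theorem stmt2 (𝒞 : Set A) (X Y : CochainComplex A ℤ)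
    (hX : ∀ i, X.X i ∈ 𝒞) (hbX : BoundedAbove X)
    (hY : ∀ i, Y.X i ∈ 𝒞) (hbY : BoundedAbove Y)
    (f : X ⟶ Y) (hf : CQuasiIso 𝒞 f) :
    ∃ g : Y ⟶ X, Nonempty (Homotopy (f ≫ g) (𝟙 X)) ∧ Nonempty (Homotopy (g ≫ f) (𝟙 Y)) := by
  obtain ⟨h⟩ := (hbX.mappingCone hbY f).nonempty_homotopy_id_zero fun n z ↦
    hf.cAcyclic_mappingCone.exists_comp_d_eq_of_mappingCone f (hX (n + 1)) (hY n) z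
  obtain ⟨e, rfl⟩ := homotopyEquivalences_of_homotopy_id_mappingCone f h
  exact ⟨e.inv, ⟨e.homotopyHomInvId⟩, ⟨e.homotopyInvHomId⟩⟩
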